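/- arXiv:2201.07393 — 2 statements merged into one kernel-verified Lean document; each statement's English description precedes it below -/
import Mathlib

section
/- Let H and J be Hilbert spaces, let Π = (Π₁,…,Π_d) be a row isometry on H which is surjective (Cuntz), i.e. each Πₖ is an isometry with pairwise orthogonal ranges summing to all of H, and let Ξ = (Ξ₁,…,Ξ_d) be a row isometry on J. If X : H → J is a bounded linear map satisfying X Πₖ = Ξₖ X for all k = 1,…,d, then Πₖ X* = X* Ξₖ for all k, and X*X commutes with every Πₖ and Πₖ*. -/
open ContinuousLinearMap
open scoped InnerProductSpace

/-- If a bounded map `X` intertwines a Cuntz (surjective) row isometry `V = (V₁,…,V_d)`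
on `H` with a row isometry `W = (W₁,…,W_d)` on `J` (i.e. `X Vₖ = Wₖ X`), then
`Vₖ X* = X* Wₖ` for all `k`, and `X*X` commutes with every `Vₖ` and `Vₖ*`. -/
theorem cuntz_intertwiner_adjoint {d : ℕ} {H J : Type*}
    [NormedAddCommGroup H] [InnerProductSpace ℂ H] [CompleteSpace H]
    [NormedAddCommGroup J] [InnerProductSpace ℂ J] [CompleteSpace J]
    (V : Fin d → H →L[ℂ] H) (W : Fin d → J →L[ℂ] J)
    (hViso : ∀ j k, (adjoint (V j)).comp (V k) = if j = k then 1 else 0)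
    (hVcuntz : ∑ k, (V k).comp (adjoint (V k)) = 1)
    (hWiso : ∀ j k, (adjoint (W j)).comp (W k) = if j = k then 1 else 0)
    (X : H →L[ℂ] J) (hX : ∀ k, X.comp (V k) = (W k).comp X) :
    (∀ k, (V k).comp (adjoint X) = (adjoint X).comp (W k)) ∧
    (∀ k, Commute ((adjoint X).comp X) (V k)) ∧
    (∀ k, Commute ((adjoint X).comp X) (adjoint (V k))) := by
  -- adjoint intertwining in the other direction
  have hadj : ∀ j, (adjoint (V j)).comp (adjoint X) = (adjoint X).comp (adjoint (W j)) := by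
    intro j
    have := congrArg adjoint (hX j)
    simpa [adjoint_comp] using this
  have hmain : ∀ k, (V k).comp (adjoint X) = (adjoint X).comp (W k) := by
    intro k
    have h1 : (adjoint X).comp (W k)
        = (∑ j, (V j).comp (adjoint (V j))).comp ((adjoint X).comp (W k)) := by
      rw [hVcuntz, one_def, id_comp]
    rw [h1, ContinuousLinearMap.finset_sum_comp]
    have h2 : ∀ j : Fin d,
        ((V j).comp (adjoint (V j))).comp ((adjoint X).comp (W k))
        = if j = k then (V k).comp (adjoint X) else 0 := by
      intro j
      rw [comp_assoc, ← comp_assoc (adjoint (V j)), hadj j, comp_assoc, hWiso j k]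
      split_ifs with h
      · subst h; rw [one_def, comp_id]
      · simp only [comp_zero]
    simp only [h2]
    simp
  refine ⟨hmain, ?_, ?_⟩
  · intro k
    have : ((adjoint X).comp X).comp (V k) = (V k).comp ((adjoint X).comp X) := by
      rw [comp_assoc, hX k, ← comp_assoc, ← hmain k, comp_assoc]
    exact this
  · intro k
    have hc : ((adjoint X).comp X).comp (V k) = (V k).comp ((adjoint X).comp X) := by
      rw [comp_assoc, hX k, ← comp_assoc, ← hmain k, comp_assoc]
    have := congrArg adjoint hc
    simp only [adjoint_comp, adjoint_adjoint] at this
    exact (by rw [← comp_assoc] at this ⊢; rw [comp_assoc] at this ⊢; exact this.symm : ((adjoint X).comp X).comp (adjoint (V k)) = (adjoint (V k)).comp ((adjoint X).comp X))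
end

section
/- Define the linear functional ξ on the operator system generated by {L^α : α ∈ F²} in B(F²) (Fock space with d = 2 free variables) by ξ(L^α) = 1 if the word α contains no letter 2, and ξ(L^α) = 0 otherwise, extended positively. In the GNS representation (π_ξ, H_ξ) of ξ with cyclic vector Ω = I + N_ξ, the vector w = π_ξ(L₂)Ω is a wandering vector for the GNS row isometry Π_ξ = (π_ξ(L₁), π_ξ(L₂)): that is, ⟨w, Π_ξ^α w⟩ = δ_{α,∅} for all words α. -/
open ContinuousLinearMap
open scoped InnerProductSpace

/-- In the GNS representation of the functional `ξ` on the free disk system in two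
variables with moments `ξ(L^α) = 1` if the word `α` contains no letter `2` and `0`
otherwise (here `V = Π_ξ` is the GNS row isometry and `Ω` the cyclic GNS vector, so
`⟨Ω, V^α Ω⟩ = ξ(L^α)`), the vector `w = V₂ Ω` is wandering: `⟨w, V^α w⟩ = δ_{α,∅}`. -/
theorem gns_point_mass_wandering_vector {H : Type*}
    [NormedAddCommGroup H] [InnerProductSpace ℂ H] [CompleteSpace H]
    (V : Fin 2 → H →L[ℂ] H)
    (hViso : ∀ j k, (adjoint (V j)).comp (V k) = if j = k then 1 else 0)
    (Ω : H)
    (hcyc : Dense (Submodule.span ℂ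
      {v : H | ∃ α : List (Fin 2), v = ((α.map V).prod) Ω} : Set H))
    (hmom : ∀ α : List (Fin 2),
      ⟪Ω, ((α.map V).prod) Ω⟫_ℂ = if (1 : Fin 2) ∈ α then 0 else 1) :
    ∀ α : List (Fin 2),
      ⟪V 1 Ω, ((α.map V).prod) (V 1 Ω)⟫_ℂ = if α = [] then 1 else 0 := by

  have hadj : ∀ j k, adjoint (V j) (V k Ω) = if j = k then Ω else 0 := by
    intro j k
    have := congrFun (congrArg DFunLike.coe (hViso j k)) Ω
    simp only [ContinuousLinearMap.comp_apply] at this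
    rw [this]
    split <;> simp
  intro α
  match α with
  | [] =>
    have : ⟪V 1 Ω, (([] : List (Fin 2)).map V).prod (V 1 Ω)⟫_ℂ
        = ⟪adjoint (V 1) (V 1 Ω), Ω⟫_ℂ := by
      simp [ContinuousLinearMap.adjoint_inner_left]
    rw [this, hadj]
    simpa using hmom []
  | j :: β =>
    have hstep : ((j :: β).map V).prod (V 1 Ω)
        = V j (((β.map V).prod) (V 1 Ω)) := by
      simp [List.prod_cons]
    rw [hstep, ← ContinuousLinearMap.adjoint_inner_left]
    by_cases hj : j = (1 : Fin 2)
    · subst hj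
      have h1 : adjoint (V 1) (V 1 Ω) = Ω := by simpa using hadj 1 1
      rw [h1]
      have happ : ((β.map V).prod) (V 1 Ω) = (((β ++ [1]).map V).prod) Ω := by
        simp [List.prod_append]
      rw [happ, hmom]
      simp
    · have h0 : adjoint (V j) (V 1 Ω) = 0 := by
        have := hadj j 1
        rw [if_neg hj] at this
        exact this
      rw [h0]
      simp [List.cons_ne_nil]
end
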